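/- arXiv:0809.3581 — 3 statements merged into one kernel-verified Lean document; each statement's English description precedes it below -/
import Mathlib

section
/- For any derivation D of Q_{2m+1} with matrix (d_{ik}) in the basis e_1,...,e_{2m+1}, setting α=d_{11} and β=d_{22}, the diagonal entries satisfy d_{kk}=(k-2)α+β for 3≤k≤2m and d_{2m+1,2m+1}=(2m-2)α+2β, and moreover d_{12}=β-α. -/
open Finset Module

section Aux

variable {m : ℕ} {L : Type} [LieRing L] [LieAlgebra ℂ L]

private lemma sum_lie' (s : Finset ℕ) (f : ℕ → L) (y : L) :
    ⁅∑ j ∈ s, f j, y⁆ = ∑ j ∈ s, ⁅f j, y⁆ := by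
  induction s using Finset.cons_induction with
  | empty => simp
  | cons a s ha ih => rw [Finset.sum_cons, Finset.sum_cons, add_lie, ih]

private lemma lie_sum' (s : Finset ℕ) (f : ℕ → L) (y : L) :
    ⁅y, ∑ j ∈ s, f j⁆ = ∑ j ∈ s, ⁅y, f j⁆ := by
  induction s using Finset.cons_induction with
  | empty => simp
  | cons a s ha ih => rw [Finset.sum_cons, Finset.sum_cons, lie_add, ih]

private lemma sum_pick0 (f g : ℕ → ℂ)
    (hg : ∀ j ∈ Finset.Icc 1 (2*m+1), g j = 0) :
    ∑ j ∈ Finset.Icc 1 (2*m+1), f j * g j = 0 := by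
  rw [Finset.sum_congr rfl (fun j hj => by rw [hg j hj, mul_zero])]
  exact Finset.sum_const_zero

private lemma sum_pick1 (f g : ℕ → ℂ) (c : ℂ) (a : ℕ) (ha : a ∈ Finset.Icc 1 (2*m+1))
    (hg : ∀ j ∈ Finset.Icc 1 (2*m+1), g j = if j = a then c else 0) :
    ∑ j ∈ Finset.Icc 1 (2*m+1), f j * g j = f a * c := by
  rw [Finset.sum_congr rfl (fun j hj => by rw [hg j hj, mul_ite, mul_zero])]
  rw [Finset.sum_ite_eq' _ a (fun j => f j * c), if_pos ha]

private lemma sum_pick2 (f g : ℕ → ℂ) (c c' : ℂ) (a a' : ℕ)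
    (ha : a ∈ Finset.Icc 1 (2*m+1)) (ha' : a' ∈ Finset.Icc 1 (2*m+1))
    (hg : ∀ j ∈ Finset.Icc 1 (2*m+1),
      g j = (if j = a then c else 0) + (if j = a' then c' else 0)) :
    ∑ j ∈ Finset.Icc 1 (2*m+1), f j * g j = f a * c + f a' * c' := by
  rw [Finset.sum_congr rfl
    (fun j hj => by rw [hg j hj, mul_add, mul_ite, mul_zero, mul_ite, mul_zero])]
  rw [Finset.sum_add_distrib, Finset.sum_ite_eq' _ a (fun j => f j * c), if_pos ha,
    Finset.sum_ite_eq' _ a' (fun j => f j * c'), if_pos ha']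

private lemma repr_e (e : ℕ → L) (b : Basis (Fin (2*m+1)) ℂ L)
    (hb : ∀ i : Fin (2*m+1), b i = e (i.val+1))
    (j : ℕ) (hj : 1 ≤ j) (hj' : j ≤ 2*m+1) (t : Fin (2*m+1)) :
    b.repr (e j) t = if t.val + 1 = j then 1 else 0 := by
  have h : e j = b ⟨j-1, by omega⟩ := by
    rw [hb]; congr 1; simp only [Fin.val_mk]; omega
  rw [h, b.repr_self, Finsupp.single_apply]
  have hiff : ((⟨j-1, by omega⟩ : Fin (2*m+1)) = t) ↔ (t.val + 1 = j) := by
    rw [Fin.ext_iff]; simp only [Fin.val_mk]; omega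
  by_cases hc : t.val + 1 = j
  · rw [if_pos (hiff.mpr hc), if_pos hc]
  · rw [if_neg (fun h' => hc (hiff.mp h')), if_neg hc]

private lemma repr_D (e : ℕ → L) (b : Basis (Fin (2*m+1)) ℂ L)
    (hb : ∀ i : Fin (2*m+1), b i = e (i.val+1))
    (D : Module.End ℂ L) (d : ℕ → ℕ → ℂ)
    (hd : ∀ i, 1 ≤ i → i ≤ 2*m+1 → D (e i) = ∑ k ∈ Finset.Icc 1 (2*m+1), d i k • e k)
    (a : ℕ) (ha : 1 ≤ a) (ha' : a ≤ 2*m+1) (t : Fin (2*m+1)) :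
    b.repr (D (e a)) t = d a (t.val+1) := by
  rw [hd a ha ha', map_sum, Finsupp.finset_sum_apply]
  have h1 : ∀ j ∈ Finset.Icc 1 (2*m+1),
      b.repr (d a j • e j) t = d a j * b.repr (e j) t := by
    intro j _; rw [map_smul, Finsupp.smul_apply, smul_eq_mul]
  rw [Finset.sum_congr rfl h1]
  have h2 := sum_pick1 (m := m) (d a) (fun j => b.repr (e j) t) 1 (t.val+1)
    (Finset.mem_Icc.mpr ⟨by omega, by omega⟩)
    (fun j hj => by
      beta_reduce
      have hj' := Finset.mem_Icc.mp hj
      rw [repr_e e b hb j hj'.1 hj'.2 t]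
      exact if_congr eq_comm rfl rfl)
  rw [h2, mul_one]

private lemma keyL (e : ℕ → L) (b : Basis (Fin (2*m+1)) ℂ L)
    (D : Module.End ℂ L) (d : ℕ → ℕ → ℂ)
    (hd : ∀ i, 1 ≤ i → i ≤ 2*m+1 → D (e i) = ∑ k ∈ Finset.Icc 1 (2*m+1), d i k • e k)
    (a k : ℕ) (ha : 1 ≤ a) (ha' : a ≤ 2*m+1) (t : Fin (2*m+1)) :
    b.repr ⁅D (e a), e k⁆ t = ∑ j ∈ Finset.Icc 1 (2*m+1), d a j * b.repr ⁅e j, e k⁆ t := by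
  rw [hd a ha ha', sum_lie', map_sum, Finsupp.finset_sum_apply]
  exact Finset.sum_congr rfl (fun j _ => by
    rw [smul_lie, map_smul, Finsupp.smul_apply, smul_eq_mul])

private lemma keyR (e : ℕ → L) (b : Basis (Fin (2*m+1)) ℂ L)
    (D : Module.End ℂ L) (d : ℕ → ℕ → ℂ)
    (hd : ∀ i, 1 ≤ i → i ≤ 2*m+1 → D (e i) = ∑ k ∈ Finset.Icc 1 (2*m+1), d i k • e k)
    (a k : ℕ) (ha : 1 ≤ a) (ha' : a ≤ 2*m+1) (t : Fin (2*m+1)) :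
    b.repr ⁅e k, D (e a)⁆ t = ∑ j ∈ Finset.Icc 1 (2*m+1), d a j * b.repr ⁅e k, e j⁆ t := by
  rw [hd a ha ha', lie_sum', map_sum, Finsupp.finset_sum_apply]
  exact Finset.sum_congr rfl (fun j _ => by
    rw [lie_smul, map_smul, Finsupp.smul_apply, smul_eq_mul])

private lemma brA (hm : 2 ≤ m) (e : ℕ → L) (b : Basis (Fin (2*m+1)) ℂ L)
    (hb : ∀ i : Fin (2*m+1), b i = e (i.val+1))
    (hrel1 : ∀ k, 2 ≤ k → k ≤ 2*m → ⁅e 1, e k⁆ = e (k+1))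
    (hrel2 : ∀ k, 2 ≤ k → k ≤ m → ⁅e k, e (2*m+2-k)⁆ = ((-1:ℂ))^k • e (2*m+1))
    (hrel0 : ∀ i j, 1 ≤ i → i < j → j ≤ 2*m+1 →
      ¬(i = 1 ∧ j ≤ 2*m) → ¬(2 ≤ i ∧ i ≤ m ∧ j = 2*m+2-i) → ⁅e i, e j⁆ = 0)
    (i j : ℕ) (hi : 1 ≤ i) (hij : i < j) (hj : j ≤ 2*m+1)
    (t : Fin (2*m+1)) (ht : t.val + 1 ≤ 2*m) :
    b.repr ⁅e i, e j⁆ t = if i = 1 ∧ t.val = j then 1 else 0 := by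
  by_cases hi1 : i = 1
  · subst hi1
    by_cases hj2 : j ≤ 2*m
    · rw [hrel1 j (by omega) hj2, repr_e e b hb (j+1) (by omega) (by omega)]
      ((try simp only [eq_self_iff_true, true_and, and_true]); split_ifs) <;> first | (exfalso; omega) | rfl | ring1 | (norm_num; done)
    · rw [hrel0 1 j (by omega) hij hj (by omega) (by omega), map_zero]
      simp only [Finsupp.coe_zero, Pi.zero_apply]
      ((try simp only [eq_self_iff_true, true_and, and_true]); split_ifs) <;> first | (exfalso; omega) | rfl | ring1 | (norm_num; done)
  · by_cases hc : j = 2*m+2-i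
    · have him : i ≤ m := by omega
      subst hc
      rw [hrel2 i (by omega) him, map_smul, Finsupp.smul_apply,
        repr_e e b hb (2*m+1) (by omega) (by omega), smul_eq_mul]
      ((try simp only [eq_self_iff_true, true_and, and_true]); split_ifs) <;> first | (exfalso; omega) | ring1 | (norm_num; done)
    · rw [hrel0 i j hi hij hj (by omega) (by omega), map_zero]
      simp only [Finsupp.coe_zero, Pi.zero_apply]
      ((try simp only [eq_self_iff_true, true_and, and_true]); split_ifs) <;> first | (exfalso; omega) | rfl | ring1 | (norm_num; done)

private lemma brB (hm : 2 ≤ m) (e : ℕ → L) (b : Basis (Fin (2*m+1)) ℂ L)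
    (hb : ∀ i : Fin (2*m+1), b i = e (i.val+1))
    (hrel1 : ∀ k, 2 ≤ k → k ≤ 2*m → ⁅e 1, e k⁆ = e (k+1))
    (hrel2 : ∀ k, 2 ≤ k → k ≤ m → ⁅e k, e (2*m+2-k)⁆ = ((-1:ℂ))^k • e (2*m+1))
    (hrel0 : ∀ i j, 1 ≤ i → i < j → j ≤ 2*m+1 →
      ¬(i = 1 ∧ j ≤ 2*m) → ¬(2 ≤ i ∧ i ≤ m ∧ j = 2*m+2-i) → ⁅e i, e j⁆ = 0)
    (i j : ℕ) (hi : 1 ≤ i) (hij : i < j) (hj : j ≤ 2*m+1) :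
    b.repr ⁅e i, e j⁆ ⟨2*m, by omega⟩ =
      if i = 1 ∧ j = 2*m then 1
      else if 2 ≤ i ∧ j = 2*m+2-i then (-1:ℂ)^i else 0 := by
  by_cases hi1 : i = 1
  · subst hi1
    by_cases hj2 : j ≤ 2*m
    · rw [hrel1 j (by omega) hj2, repr_e e b hb (j+1) (by omega) (by omega)]
      simp only [Fin.val_mk]
      ((try simp only [eq_self_iff_true, true_and, and_true]); split_ifs) <;> first | (exfalso; omega) | rfl | ring1 | (norm_num; done)
    · rw [hrel0 1 j (by omega) hij hj (by omega) (by omega), map_zero]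
      simp only [Finsupp.coe_zero, Pi.zero_apply]
      ((try simp only [eq_self_iff_true, true_and, and_true]); split_ifs) <;> first | (exfalso; omega) | rfl | ring1 | (norm_num; done)
  · by_cases hc : j = 2*m+2-i
    · have him : i ≤ m := by omega
      subst hc
      rw [hrel2 i (by omega) him, map_smul, Finsupp.smul_apply,
        repr_e e b hb (2*m+1) (by omega) (by omega), smul_eq_mul]
      simp only [Fin.val_mk]
      ((try simp only [eq_self_iff_true, true_and, and_true]); split_ifs) <;> first | (exfalso; omega) | ring1 | (norm_num; done)
    · rw [hrel0 i j hi hij hj (by omega) (by omega), map_zero]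
      simp only [Finsupp.coe_zero, Pi.zero_apply]
      ((try simp only [eq_self_iff_true, true_and, and_true]); split_ifs) <;> first | (exfalso; omega) | rfl | ring1 | (norm_num; done)

private lemma brA' (hm : 2 ≤ m) (e : ℕ → L) (b : Basis (Fin (2*m+1)) ℂ L)
    (hb : ∀ i : Fin (2*m+1), b i = e (i.val+1))
    (hrel1 : ∀ k, 2 ≤ k → k ≤ 2*m → ⁅e 1, e k⁆ = e (k+1))
    (hrel2 : ∀ k, 2 ≤ k → k ≤ m → ⁅e k, e (2*m+2-k)⁆ = ((-1:ℂ))^k • e (2*m+1))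
    (hrel0 : ∀ i j, 1 ≤ i → i < j → j ≤ 2*m+1 →
      ¬(i = 1 ∧ j ≤ 2*m) → ¬(2 ≤ i ∧ i ≤ m ∧ j = 2*m+2-i) → ⁅e i, e j⁆ = 0)
    (j k : ℕ) (hj : 1 ≤ j) (hj' : j ≤ 2*m+1) (hk : 1 ≤ k) (hk' : k ≤ 2*m+1)
    (t : Fin (2*m+1)) (ht : t.val + 1 ≤ 2*m) :
    b.repr ⁅e j, e k⁆ t =
      (if j = 1 ∧ t.val = k ∧ 1 < k then 1 else 0)
      - (if k = 1 ∧ t.val = j ∧ 1 < j then 1 else 0) := by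
  rcases lt_trichotomy j k with h | h | h
  · rw [brA hm e b hb hrel1 hrel2 hrel0 j k hj h hk' t ht]
    ((try simp only [eq_self_iff_true, true_and, and_true]); split_ifs) <;> first | (exfalso; omega) | ring1 | (norm_num; done)
  · subst h
    rw [show ⁅e j, e j⁆ = (0:L) from lie_self _, map_zero]
    simp only [Finsupp.coe_zero, Pi.zero_apply]
    ((try simp only [eq_self_iff_true, true_and, and_true]); split_ifs) <;> first | (exfalso; omega) | ring1 | (norm_num; done)
  · rw [← lie_skew, map_neg, Finsupp.neg_apply,
      brA hm e b hb hrel1 hrel2 hrel0 k j hk h hj' t ht]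
    ((try simp only [eq_self_iff_true, true_and, and_true]); split_ifs) <;> first | (exfalso; omega) | ring1 | (norm_num; done)

private lemma brB' (hm : 2 ≤ m) (e : ℕ → L) (b : Basis (Fin (2*m+1)) ℂ L)
    (hb : ∀ i : Fin (2*m+1), b i = e (i.val+1))
    (hrel1 : ∀ k, 2 ≤ k → k ≤ 2*m → ⁅e 1, e k⁆ = e (k+1))
    (hrel2 : ∀ k, 2 ≤ k → k ≤ m → ⁅e k, e (2*m+2-k)⁆ = ((-1:ℂ))^k • e (2*m+1))
    (hrel0 : ∀ i j, 1 ≤ i → i < j → j ≤ 2*m+1 →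
      ¬(i = 1 ∧ j ≤ 2*m) → ¬(2 ≤ i ∧ i ≤ m ∧ j = 2*m+2-i) → ⁅e i, e j⁆ = 0)
    (j k : ℕ) (hj : 1 ≤ j) (hj' : j ≤ 2*m+1) (hk : 1 ≤ k) (hk' : k ≤ 2*m+1) :
    b.repr ⁅e j, e k⁆ ⟨2*m, by omega⟩ =
      (if j = 1 ∧ k = 2*m then 1
        else if 2 ≤ j ∧ j < k ∧ k = 2*m+2-j then (-1:ℂ)^j else 0)
      - (if k = 1 ∧ j = 2*m then 1
        else if 2 ≤ k ∧ k < j ∧ j = 2*m+2-k then (-1:ℂ)^k else 0) := by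
  rcases lt_trichotomy j k with h | h | h
  · rw [brB hm e b hb hrel1 hrel2 hrel0 j k hj h hk']
    ((try simp only [eq_self_iff_true, true_and, and_true]); split_ifs) <;> first | (exfalso; omega) | ring1 | (norm_num; done)
  · subst h
    rw [show ⁅e j, e j⁆ = (0:L) from lie_self _, map_zero]
    simp only [Finsupp.coe_zero, Pi.zero_apply]
    ((try simp only [eq_self_iff_true, true_and, and_true]); split_ifs) <;> first | (exfalso; omega) | ring1 | (norm_num; done)
  · rw [← lie_skew, map_neg, Finsupp.neg_apply,
      brB hm e b hb hrel1 hrel2 hrel0 k j hk h hj']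
    ((try simp only [eq_self_iff_true, true_and, and_true]); split_ifs) <;> first | (exfalso; omega) | ring1 | (norm_num; done)

end Aux

theorem stmt6 {m : ℕ} (hm : 2 ≤ m)
    {L : Type} [LieRing L] [LieAlgebra ℂ L]
    (e : ℕ → L) (b : Basis (Fin (2*m+1)) ℂ L)
    (hb : ∀ i : Fin (2*m+1), b i = e (i.val+1))
    (hrel1 : ∀ k, 2 ≤ k → k ≤ 2*m → ⁅e 1, e k⁆ = e (k+1))
    (hrel2 : ∀ k, 2 ≤ k → k ≤ m → ⁅e k, e (2*m+2-k)⁆ = ((-1:ℂ))^k • e (2*m+1))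
    (hrel0 : ∀ i j, 1 ≤ i → i < j → j ≤ 2*m+1 →
      ¬(i = 1 ∧ j ≤ 2*m) → ¬(2 ≤ i ∧ i ≤ m ∧ j = 2*m+2-i) → ⁅e i, e j⁆ = 0)
    (D : Module.End ℂ L)
    (hD : ∀ x y : L, D ⁅x, y⁆ = ⁅D x, y⁆ + ⁅x, D y⁆)
    (d : ℕ → ℕ → ℂ)
    (hd : ∀ i, 1 ≤ i → i ≤ 2*m+1 → D (e i) = ∑ k ∈ Finset.Icc 1 (2*m+1), d i k • e k)
 :
    d 1 2 = d 2 2 - d 1 1 ∧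
    (∀ k, 3 ≤ k → k ≤ 2*m → d k k = ((k : ℂ) - 2) * d 1 1 + d 2 2) ∧
    d (2*m+1) (2*m+1) = (((2*m : ℕ) : ℂ) - 2) * d 1 1 + 2 * d 2 2 := by
  have hmem : ∀ a : ℕ, 1 ≤ a → a ≤ 2*m+1 → a ∈ Finset.Icc 1 (2*m+1) :=
    fun a h1 h2 => Finset.mem_Icc.mpr ⟨h1, h2⟩
  -- Step 1 : d 2 1 = 0
  have e21 : d 2 1 = 0 := by
    have h0 := hD (e 2) (e 3)
    rw [hrel0 2 3 (by omega) (by omega) (by omega) (by omega) (by omega), map_zero] at h0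
    have h1 : b.repr (0:L) (⟨3, by omega⟩ : Fin (2*m+1)) =
        b.repr (⁅D (e 2), e 3⁆ + ⁅e 2, D (e 3)⁆) ⟨3, by omega⟩ := by rw [← h0]
    rw [map_add, Finsupp.add_apply,
      keyL e b D d hd 2 3 (by omega) (by omega) ⟨3, by omega⟩,
      keyR e b D d hd 3 2 (by omega) (by omega) ⟨3, by omega⟩,
      map_zero] at h1
    simp only [Finsupp.coe_zero, Pi.zero_apply] at h1
    rw [sum_pick1 (d 2) _ 1 1 (hmem 1 (by omega) (by omega)) (fun j hj => by
        beta_reduce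
        have hj' := Finset.mem_Icc.mp hj
        rw [brA' hm e b hb hrel1 hrel2 hrel0 j 3 hj'.1 hj'.2 (by omega) (by omega)
          ⟨3, by omega⟩ (by simp only [Fin.val_mk]; omega)]
        simp only [Fin.val_mk]
        ((try simp only [eq_self_iff_true, true_and, and_true]); split_ifs) <;> first | (exfalso; omega) | rfl | ring1 | (rw [show j = 2 from by omega]; norm_num) | (norm_num; done)),
      sum_pick0 (d 3) _ (fun j hj => by
        beta_reduce
        have hj' := Finset.mem_Icc.mp hj
        rw [brA' hm e b hb hrel1 hrel2 hrel0 2 j (by omega) (by omega) hj'.1 hj'.2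
          ⟨3, by omega⟩ (by simp only [Fin.val_mk]; omega)]
        simp only [Fin.val_mk]
        ((try simp only [eq_self_iff_true, true_and, and_true]); split_ifs) <;> first | (exfalso; omega) | rfl | ring1 | (rw [show j = 2 from by omega]; norm_num) | (norm_num; done))] at h1
    linear_combination -h1
  -- Step 2 : recursion
  have hrec : ∀ k, 2 ≤ k → k + 1 ≤ 2*m → d (k+1) (k+1) = d 1 1 + d k k := by
    intro k hk2 hk2m
    have h0 := hD (e 1) (e k)
    rw [hrel1 k hk2 (by omega)] at h0
    have hL : b.repr (D (e (k+1))) (⟨k, by omega⟩ : Fin (2*m+1)) = d (k+1) (k+1) :=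
      repr_D e b hb D d hd (k+1) (by omega) (by omega) ⟨k, by omega⟩
    have h1 : b.repr (D (e (k+1))) (⟨k, by omega⟩ : Fin (2*m+1)) =
        b.repr (⁅D (e 1), e k⁆ + ⁅e 1, D (e k)⁆) ⟨k, by omega⟩ := by rw [h0]
    rw [hL, map_add, Finsupp.add_apply,
      keyL e b D d hd 1 k (by omega) (by omega) ⟨k, by omega⟩,
      keyR e b D d hd k 1 (by omega) (by omega) ⟨k, by omega⟩] at h1
    rw [sum_pick1 (d 1) _ 1 1 (hmem 1 (by omega) (by omega)) (fun j hj => by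
        beta_reduce
        have hj' := Finset.mem_Icc.mp hj
        rw [brA' hm e b hb hrel1 hrel2 hrel0 j k hj'.1 hj'.2 (by omega) (by omega)
          ⟨k, by omega⟩ (by simp only [Fin.val_mk]; omega)]
        simp only [Fin.val_mk]
        ((try simp only [eq_self_iff_true, true_and, and_true]); split_ifs) <;> first | (exfalso; omega) | rfl | ring1 | (rw [show j = 2 from by omega]; norm_num) | (norm_num; done)),
      sum_pick1 (d k) _ 1 k (hmem k (by omega) (by omega)) (fun j hj => by
        beta_reduce
        have hj' := Finset.mem_Icc.mp hj
        rw [brA' hm e b hb hrel1 hrel2 hrel0 1 j (by omega) (by omega) hj'.1 hj'.2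
          ⟨k, by omega⟩ (by simp only [Fin.val_mk]; omega)]
        simp only [Fin.val_mk]
        ((try simp only [eq_self_iff_true, true_and, and_true]); split_ifs) <;> first | (exfalso; omega) | rfl | ring1 | (rw [show j = 2 from by omega]; norm_num) | (norm_num; done))] at h1
    linear_combination h1
  have hdiag : ∀ k, 3 ≤ k → k ≤ 2*m → d k k = ((k : ℂ) - 2) * d 1 1 + d 2 2 := by
    intro k hk
    induction k, hk using Nat.le_induction with
    | base =>
      intro _
      have h := hrec 2 (by omega) (by omega)
      push_cast
      linear_combination h
    | succ k hk ih =>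
      intro hk2m
      have h := hrec k (by omega) (by omega)
      have ihh := ih (by omega)
      push_cast
      push_cast at ihh
      linear_combination h + ihh
  -- Step 3 : equation (a) at the top coordinate
  have ea : d (2*m+1) (2*m+1) = (d 1 1 * 1 + d 1 2 * 1) + d (2*m) (2*m) * 1 := by
    have h0 := hD (e 1) (e (2*m))
    rw [hrel1 (2*m) (by omega) (by omega)] at h0
    have hL : b.repr (D (e (2*m+1))) (⟨2*m, by omega⟩ : Fin (2*m+1)) =
        d (2*m+1) (2*m+1) :=
      repr_D e b hb D d hd (2*m+1) (by omega) (by omega) ⟨2*m, by omega⟩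
    have h1 : b.repr (D (e (2*m+1))) (⟨2*m, by omega⟩ : Fin (2*m+1)) =
        b.repr (⁅D (e 1), e (2*m)⁆ + ⁅e 1, D (e (2*m))⁆) ⟨2*m, by omega⟩ := by rw [h0]
    rw [hL, map_add, Finsupp.add_apply,
      keyL e b D d hd 1 (2*m) (by omega) (by omega) ⟨2*m, by omega⟩,
      keyR e b D d hd (2*m) 1 (by omega) (by omega) ⟨2*m, by omega⟩] at h1
    rw [sum_pick2 (d 1) _ 1 1 1 2 (hmem 1 (by omega) (by omega))
        (hmem 2 (by omega) (by omega)) (fun j hj => by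
        beta_reduce
        have hj' := Finset.mem_Icc.mp hj
        rw [brB' hm e b hb hrel1 hrel2 hrel0 j (2*m) hj'.1 hj'.2 (by omega) (by omega)]
        ((try simp only [eq_self_iff_true, true_and, and_true]); split_ifs) <;>
          first | (exfalso; omega) | rfl | ring1 | (rw [show j = 2 from by omega]; norm_num) | (norm_num; done)),
      sum_pick1 (d (2*m)) _ 1 (2*m) (hmem (2*m) (by omega) (by omega)) (fun j hj => by
        beta_reduce
        have hj' := Finset.mem_Icc.mp hj
        rw [brB' hm e b hb hrel1 hrel2 hrel0 1 j (by omega) (by omega) hj'.1 hj'.2]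
        ((try simp only [eq_self_iff_true, true_and, and_true]); split_ifs) <;>
          first | (exfalso; omega) | rfl | ring1 | (rw [show j = 2 from by omega]; norm_num) | (norm_num; done))] at h1
    exact h1
  -- Step 4 : equation (b) at the top coordinate
  have eb : d (2*m+1) (2*m+1) = (d 2 1 * 1 + d 2 2 * 1) + d (2*m) (2*m) * 1 := by
    have hbr : ⁅e 2, e (2*m)⁆ = e (2*m+1) := by
      have h := hrel2 2 (le_refl 2) hm
      rw [show 2*m+2-2 = 2*m by omega] at h
      simpa using h
    have h0 := hD (e 2) (e (2*m))
    rw [hbr] at h0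
    have hL : b.repr (D (e (2*m+1))) (⟨2*m, by omega⟩ : Fin (2*m+1)) =
        d (2*m+1) (2*m+1) :=
      repr_D e b hb D d hd (2*m+1) (by omega) (by omega) ⟨2*m, by omega⟩
    have h1 : b.repr (D (e (2*m+1))) (⟨2*m, by omega⟩ : Fin (2*m+1)) =
        b.repr (⁅D (e 2), e (2*m)⁆ + ⁅e 2, D (e (2*m))⁆) ⟨2*m, by omega⟩ := by rw [h0]
    rw [hL, map_add, Finsupp.add_apply,
      keyL e b D d hd 2 (2*m) (by omega) (by omega) ⟨2*m, by omega⟩,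
      keyR e b D d hd (2*m) 2 (by omega) (by omega) ⟨2*m, by omega⟩] at h1
    rw [sum_pick2 (d 2) _ 1 1 1 2 (hmem 1 (by omega) (by omega))
        (hmem 2 (by omega) (by omega)) (fun j hj => by
        beta_reduce
        have hj' := Finset.mem_Icc.mp hj
        rw [brB' hm e b hb hrel1 hrel2 hrel0 j (2*m) hj'.1 hj'.2 (by omega) (by omega)]
        ((try simp only [eq_self_iff_true, true_and, and_true]); split_ifs) <;>
          first | (exfalso; omega) | rfl | ring1 | (rw [show j = 2 from by omega]; norm_num) | (norm_num; done)),
      sum_pick1 (d (2*m)) _ 1 (2*m) (hmem (2*m) (by omega) (by omega)) (fun j hj => by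
        beta_reduce
        have hj' := Finset.mem_Icc.mp hj
        rw [brB' hm e b hb hrel1 hrel2 hrel0 2 j (by omega) (by omega) hj'.1 hj'.2]
        ((try simp only [eq_self_iff_true, true_and, and_true]); split_ifs) <;>
          first | (exfalso; omega) | rfl | ring1 | (rw [show j = 2 from by omega]; norm_num) | (norm_num; done))] at h1
    exact h1
  have h2m : d (2*m) (2*m) = (((2*m : ℕ) : ℂ) - 2) * d 1 1 + d 2 2 :=
    hdiag (2*m) (by omega) (by omega)
  refine ⟨by linear_combination eb - ea + e21, hdiag, ?_⟩
  linear_combination eb + e21 + h2m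
end

section
/- For every automorphism σ = (a_{ik}) of Q_{2m+1}, the subdiagonal block entries satisfy a_{ij} = p^{i-2} a_{2, j-i+2} for all 3 ≤ i < j ≤ 2m, where p = a_{11}. -/
open Finset Module

theorem stmt13 {m : ℕ} (hm : 2 ≤ m)
    {L : Type} [LieRing L] [LieAlgebra ℂ L]
    (e : ℕ → L) (b : Basis (Fin (2*m+1)) ℂ L)
    (hb : ∀ i : Fin (2*m+1), b i = e (i.val+1))
    (hrel1 : ∀ k, 2 ≤ k → k ≤ 2*m → ⁅e 1, e k⁆ = e (k+1))
    (hrel2 : ∀ k, 2 ≤ k → k ≤ m → ⁅e k, e (2*m+2-k)⁆ = ((-1:ℂ))^k • e (2*m+1))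
    (hrel0 : ∀ i j, 1 ≤ i → i < j → j ≤ 2*m+1 →
      ¬(i = 1 ∧ j ≤ 2*m) → ¬(2 ≤ i ∧ i ≤ m ∧ j = 2*m+2-i) → ⁅e i, e j⁆ = 0)
    (σ : L ≃ₗ[ℂ] L)
    (hσ : ∀ x y : L, σ ⁅x, y⁆ = ⁅σ x, σ y⁆)
    (a : ℕ → ℕ → ℂ)
    (ha : ∀ i, 1 ≤ i → i ≤ 2*m+1 → σ (e i) = ∑ k ∈ Finset.Icc 1 (2*m+1), a i k • e k)
 :
    ∀ i j, 3 ≤ i → i < j → j ≤ 2*m → a i j = a 1 1 ^ (i-2) * a 2 (j - i + 2) := by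
  have hNpos : 0 < 2*m+1 := by omega
  -- coordinate maps
  set c : ℕ → L →ₗ[ℂ] ℂ := fun j => b.coord ⟨(j-1) % (2*m+1), Nat.mod_lt _ hNpos⟩
    with hcdef
  -- picking a single term out of a sum
  have pick : ∀ (f : ℕ → ℂ) (t : ℕ), 1 ≤ t → t ≤ 2*m+1 →
      ∑ l ∈ Finset.Icc 1 (2*m+1), (if l = t then f l else 0) = f t := by
    intro f t h1 h2
    rw [Finset.sum_ite_eq' (Finset.Icc 1 (2*m+1)) t f,
      if_pos (Finset.mem_Icc.mpr ⟨h1, h2⟩)]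
  -- bracket commutes with sums
  have lie_sum' : ∀ (x : L) (s : Finset ℕ) (f : ℕ → L),
      ⁅x, ∑ i ∈ s, f i⁆ = ∑ i ∈ s, ⁅x, f i⁆ := by
    intro x s f
    induction s using Finset.cons_induction with
    | empty => simp
    | cons a s hs ih => rw [Finset.sum_cons, Finset.sum_cons, lie_add, ih]
  have sum_lie' : ∀ (y : L) (s : Finset ℕ) (f : ℕ → L),
      ⁅∑ i ∈ s, f i, y⁆ = ∑ i ∈ s, ⁅f i, y⁆ := by
    intro y s f
    induction s using Finset.cons_induction with
    | empty => simp
    | cons a s hs ih => rw [Finset.sum_cons, Finset.sum_cons, add_lie, ih]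
  -- coordinates of basis vectors
  have hce : ∀ i j, 1 ≤ i → i ≤ 2*m+1 → 1 ≤ j → j ≤ 2*m+1 →
      c j (e i) = if i = j then 1 else 0 := by
    intro i j hi1 hi2 hj1 hj2
    have hei : e i = b ⟨i-1, by omega⟩ := by
      rw [hb ⟨i-1, by omega⟩]; congr 1; show i = i - 1 + 1; omega
    have hiff : (i - 1 = (j-1) % (2*m+1)) ↔ (i = j) := by
      rw [Nat.mod_eq_of_lt (by omega : j - 1 < 2*m+1)]; omega
    rw [hei, hcdef]
    simp only [Basis.coord_apply, Basis.repr_self, Finsupp.single_apply, Fin.ext_iff, hiff]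
  -- coordinates of σ (e i)
  have hca : ∀ i j, 1 ≤ i → i ≤ 2*m+1 → 1 ≤ j → j ≤ 2*m+1 →
      c j (σ (e i)) = a i j := by
    intro i j hi1 hi2 hj1 hj2
    rw [ha i hi1 hi2, map_sum]
    have step : ∀ k ∈ Finset.Icc 1 (2*m+1),
        c j (a i k • e k) = if k = j then a i k else 0 := by
      intro k hk
      obtain ⟨hk1, hkN⟩ := Finset.mem_Icc.mp hk
      rw [map_smul, hce k j hk1 hkN hj1 hj2]
      by_cases h : k = j <;> simp [h]
    rw [Finset.sum_congr rfl step, pick (a i) j hj1 hj2]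
  -- brackets of basis vectors with both indices ≥ 2 have no coordinates below 2m+1
  have hz : ∀ k l, 2 ≤ k → 2 ≤ l → k < l → l ≤ 2*m+1 → ∀ jj, 1 ≤ jj → jj ≤ 2*m →
      c jj ⁅e k, e l⁆ = 0 := by
    intro k l hk2 hl2 hkl hlN jj hjj1 hjj2
    by_cases hkm : 2 ≤ k ∧ k ≤ m ∧ l = 2*m+2-k
    · obtain ⟨h1, h2, h3⟩ := hkm
      subst h3
      rw [hrel2 k h1 h2, map_smul]
      rw [hce (2*m+1) jj (by omega) (by omega) (by omega) (by omega)]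
      rw [if_neg (show ¬(2*m+1 = jj) from by omega)]
      simp
    · rw [hrel0 k l (by omega) hkl hlN (by omega) hkm, map_zero]
  -- the full bracket coordinate table (coordinates 1..2m)
  have hbr : ∀ k l jj, 1 ≤ k → k ≤ 2*m+1 → 1 ≤ l → l ≤ 2*m+1 → 1 ≤ jj → jj ≤ 2*m →
      c jj ⁅e k, e l⁆ =
        (if k = 1 ∧ l + 1 = jj then 1 else 0) - (if l = 1 ∧ k + 1 = jj then 1 else 0) := by
    intro k l jj hk1 hkN hl1 hlN hjj1 hjj2
    rcases eq_or_lt_of_le hk1 with hk | hk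
    · -- k = 1
      rcases eq_or_lt_of_le hl1 with hl | hl
      · -- l = 1
        rw [← hk, ← hl]
        simp [lie_self]
      · -- l ≥ 2
        rw [if_neg (show ¬(l = 1 ∧ k + 1 = jj) from by omega), sub_zero, ← hk]
        rcases Nat.lt_or_ge l (2*m+1) with hl' | hl'
        · rw [hrel1 l (by omega) (by omega)]
          rw [hce (l+1) jj (by omega) (by omega) hjj1 (by omega)]
          simp
        · -- l = 2m+1
          rw [hrel0 1 l (by omega) (by omega) (by omega) (by omega) (by omega), map_zero]
          rw [if_neg (show ¬(1 = 1 ∧ l + 1 = jj) from by omega)]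
    · rcases eq_or_lt_of_le hl1 with hl | hl
      · -- l = 1, k ≥ 2
        rw [if_neg (show ¬(k = 1 ∧ l + 1 = jj) from by omega), zero_sub, ← hl]
        rw [← lie_skew, map_neg]
        rcases Nat.lt_or_ge k (2*m+1) with hk' | hk'
        · rw [hrel1 k (by omega) (by omega)]
          rw [hce (k+1) jj (by omega) (by omega) hjj1 (by omega)]
          simp
        · rw [hrel0 1 k (by omega) (by omega) (by omega) (by omega) (by omega), map_zero]
          rw [if_neg (show ¬(1 = 1 ∧ k + 1 = jj) from by omega), neg_zero]
      · -- k,l ≥ 2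
        rw [if_neg (show ¬(k = 1 ∧ l + 1 = jj) from by omega),
          if_neg (show ¬(l = 1 ∧ k + 1 = jj) from by omega), sub_zero]
        rcases Nat.lt_trichotomy k l with h | h | h
        · exact hz k l (by omega) (by omega) h hlN jj hjj1 hjj2
        · rw [h, lie_self, map_zero]
        · rw [← lie_skew, map_neg, hz l k (by omega) (by omega) h hkN jj hjj1 hjj2, neg_zero]
  -- coordinates of brackets of images
  have hcb : ∀ p q jj, 1 ≤ p → p ≤ 2*m+1 → 1 ≤ q → q ≤ 2*m+1 → 1 ≤ jj → jj ≤ 2*m →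
      c jj ⁅σ (e p), σ (e q)⁆ =
        (if 2 ≤ jj then a p 1 * a q (jj-1) - a p (jj-1) * a q 1 else 0) := by
    intro p q jj hp1 hpN hq1 hqN hjj1 hjj2
    have expand : c jj ⁅σ (e p), σ (e q)⁆ = ∑ k ∈ Finset.Icc 1 (2*m+1),
        ∑ l ∈ Finset.Icc 1 (2*m+1), a p k * (a q l * c jj ⁅e k, e l⁆) := by
      rw [ha p hp1 hpN, ha q hq1 hqN]
      rw [sum_lie']
      rw [map_sum]
      refine Finset.sum_congr rfl fun k hk => ?_
      rw [smul_lie, lie_sum', map_smul, map_sum, smul_eq_mul, Finset.mul_sum]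
      refine Finset.sum_congr rfl fun l hl => ?_
      rw [lie_smul, map_smul, smul_eq_mul]
    rw [expand]
    by_cases h2 : 2 ≤ jj
    · rw [if_pos h2]
      have step : ∀ k ∈ Finset.Icc 1 (2*m+1),
          ∑ l ∈ Finset.Icc 1 (2*m+1), a p k * (a q l * c jj ⁅e k, e l⁆)
          = (if k = 1 then a p k * a q (jj-1) else 0)
            - (if k = jj - 1 then a p k * a q 1 else 0) := by
        intro k hk
        obtain ⟨hk1, hkN⟩ := Finset.mem_Icc.mp hk
        have inner : ∀ l ∈ Finset.Icc 1 (2*m+1), a p k * (a q l * c jj ⁅e k, e l⁆)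
            = (if l = jj - 1 then (if k = 1 then a p k * a q l else 0) else 0)
              - (if l = 1 then (if k = jj - 1 then a p k * a q l else 0) else 0) := by
          intro l hl
          obtain ⟨hl1, hlN⟩ := Finset.mem_Icc.mp hl
          rw [hbr k l jj hk1 hkN hl1 hlN hjj1 hjj2]
          simp only [show (k = 1 ∧ l + 1 = jj) ↔ (l = jj - 1 ∧ k = 1) from by omega,
            show (l = 1 ∧ k + 1 = jj) ↔ (l = 1 ∧ k = jj - 1) from by omega]
          split_ifs <;> first | ring1 | (exfalso; omega)
        rw [Finset.sum_congr rfl inner, Finset.sum_sub_distrib]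
        rw [pick (fun l => if k = 1 then a p k * a q l else 0) (jj-1) (by omega) (by omega)]
        rw [pick (fun l => if k = jj - 1 then a p k * a q l else 0) 1 (by omega) (by omega)]
      rw [Finset.sum_congr rfl step, Finset.sum_sub_distrib]
      rw [pick (fun k => a p k * a q (jj-1)) 1 (by omega) (by omega)]
      rw [pick (fun k => a p k * a q 1) (jj-1) (by omega) (by omega)]
    · rw [if_neg h2]
      refine Finset.sum_eq_zero fun k hk => Finset.sum_eq_zero fun l hl => ?_
      obtain ⟨hk1, hkN⟩ := Finset.mem_Icc.mp hk
      obtain ⟨hl1, hlN⟩ := Finset.mem_Icc.mp hl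
      rw [hbr k l jj hk1 hkN hl1 hlN hjj1 hjj2]
      rw [if_neg (show ¬(k = 1 ∧ l + 1 = jj) from by omega),
        if_neg (show ¬(l = 1 ∧ k + 1 = jj) from by omega)]
      simp
  -- the fundamental recursion
  have hA : ∀ i jj, 2 ≤ i → i ≤ 2*m → 1 ≤ jj → jj ≤ 2*m →
      a (i+1) jj = (if 2 ≤ jj then a 1 1 * a i (jj-1) - a 1 (jj-1) * a i 1 else 0) := by
    intro i jj hi1 hi2 hjj1 hjj2
    have h1 : σ (e (i+1)) = ⁅σ (e 1), σ (e i)⁆ := by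
      rw [← hσ, hrel1 i hi1 hi2]
    have h2 := hca (i+1) jj (by omega) (by omega) hjj1 (by omega)
    rw [h1] at h2
    rw [← h2, hcb 1 i jj (by omega) (by omega) (by omega) (by omega) hjj1 hjj2]
  -- the first column and second column vanish for rows ≥ 3
  have h1a : ∀ i, 3 ≤ i → i ≤ 2*m+1 → a i 1 = 0 := by
    intro i hi1 hi2
    have h := hA (i-1) 1 (by omega) (by omega) (by omega) (by omega)
    rw [show i - 1 + 1 = i by omega] at h
    rw [h, if_neg (show ¬(2 ≤ 1) from by omega)]
  have h2a : ∀ i, 3 ≤ i → i ≤ 2*m+1 → a i 2 = 0 := by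
    intro i hi1 hi2
    have h := hA (i-1) 2 (by omega) (by omega) (by omega) (by omega)
    rw [show i - 1 + 1 = i by omega] at h
    rw [h, if_pos (show (2:ℕ) ≤ 2 from le_refl 2)]
    norm_num
  -- e (2m+1) is central
  have hcent : ∀ k, 1 ≤ k → k ≤ 2*m+1 → ⁅e k, e (2*m+1)⁆ = 0 := by
    intro k hk1 hk2
    rcases Nat.lt_or_ge k (2*m+1) with h | h
    · exact hrel0 k (2*m+1) hk1 h (le_refl _) (by omega) (by omega)
    · have hk : k = 2*m+1 := by omega
      rw [hk, lie_self]
  -- a 2 1 = 0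
  have h21 : a 2 1 = 0 := by
    by_contra h21
    -- row 3 vanishes up to column 2m-1
    have h3z : ∀ s, 1 ≤ s → s ≤ 2*m-1 → a 3 s = 0 := by
      intro s hs1 hs2
      rcases Nat.lt_or_ge s 3 with hs | hs
      · rcases Nat.lt_or_ge s 2 with hs' | hs'
        · have hse : s = 1 := by omega
          rw [hse]; exact h1a 3 (by omega) (by omega)
        · have hse : s = 2 := by omega
          rw [hse]; exact h2a 3 (by omega) (by omega)
      · -- use ⁅σ e 2, σ e 3⁆ = 0, coordinate s+1
        have hz23 : ⁅e 2, e 3⁆ = 0 :=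
          hrel0 2 3 (by omega) (by omega) (by omega) (by omega) (by omega)
        have h0 : ⁅σ (e 2), σ (e 3)⁆ = 0 := by
          rw [← hσ, hz23, map_zero]
        have h := hcb 2 3 (s+1) (by omega) (by omega) (by omega) (by omega)
          (by omega) (by omega)
        rw [h0, map_zero, if_pos (show 2 ≤ s + 1 from by omega)] at h
        rw [show s + 1 - 1 = s by omega] at h
        rw [h1a 3 (by omega) (by omega), mul_zero, sub_zero] at h
        rcases mul_eq_zero.mp h.symm with hc | hc
        · exact absurd hc h21
        · exact hc
    -- row 4 vanishes up to column 2m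
    have h4z : ∀ s, 1 ≤ s → s ≤ 2*m → a 4 s = 0 := by
      intro s hs1 hs2
      rcases Nat.lt_or_ge s 2 with hs | hs
      · have hse : s = 1 := by omega
        rw [hse]; exact h1a 4 (by omega) (by omega)
      · have h := hA 3 s (by omega) (by omega) (by omega) (by omega)
        rw [h, if_pos hs]
        rw [h3z (s-1) (by omega) (by omega), h1a 3 (by omega) (by omega)]
        ring
    -- σ (e 5) = 0
    have hc5 : σ (e 5) = 0 := by
      have h1 : σ (e 5) = ⁅σ (e 1), σ (e 4)⁆ := by
        rw [← hσ, hrel1 4 (by omega) (by omega)]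
      rw [h1, ha 4 (by omega) (by omega), lie_sum']
      refine Finset.sum_eq_zero fun l hl => ?_
      obtain ⟨hl1, hlN⟩ := Finset.mem_Icc.mp hl
      rcases Nat.lt_or_ge l (2*m+1) with h | h
      · rw [h4z l hl1 (by omega), zero_smul, lie_zero]
      · have hl' : l = 2*m+1 := by omega
        subst hl'
        have hz1 : ⁅σ (e 1), e (2*m+1)⁆ = 0 := by
          rw [ha 1 (by omega) (by omega), sum_lie']
          refine Finset.sum_eq_zero fun k hk => ?_
          obtain ⟨hk1, hkN⟩ := Finset.mem_Icc.mp hk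
          rw [smul_lie, hcent k hk1 hkN, smul_zero]
        rw [lie_smul, hz1, smul_zero]
    -- contradiction with injectivity of σ
    have he5 : e 5 = 0 := σ.injective (by rw [hc5, map_zero] : σ (e 5) = σ 0)
    have hb5 : b ⟨4, by omega⟩ = e 5 := hb ⟨4, by omega⟩
    exact b.ne_zero ⟨4, by omega⟩ (hb5.trans he5)
  -- the main induction
  intro i j hi3
  induction i, hi3 using Nat.le_induction generalizing j with
  | base =>
    intro hij hj
    have h := hA 2 j (by omega) (by omega) (by omega) (by omega)
    rw [show (3:ℕ) = 2 + 1 from rfl, h, if_pos (show 2 ≤ j from by omega), h21,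
      mul_zero, sub_zero]
    rw [show (3:ℕ) - 2 = 1 from rfl, pow_one, show j - 3 + 2 = j - 1 by omega]
  | succ i hi IH =>
    intro hij hj
    have h := hA i j (by omega) (by omega) (by omega) (by omega)
    rw [h, if_pos (show 2 ≤ j from by omega)]
    rw [h1a i (by omega) (by omega), mul_zero, sub_zero]
    rw [IH (j-1) (by omega) (by omega)]
    rw [show i + 1 - 2 = (i - 2) + 1 by omega, pow_succ,
      show j - 1 - i + 2 = j - (i+1) + 2 by omega]
    ring
end

section
/- In Q_{2m+1}, the map D_2 with matrix entries (D_2)_{11}=0, (D_2)_{12}=1, (D_2)_{kk}=1 for 2≤k≤2m, (D_2)_{m+1,2m+1}=μ/(m-1), (D_2)_{2m+1,2m+1}=2, and all other entries zero, is an outer derivation: there is no z∈Q_{2m+1} with D_2=ad(z). -/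
open Finset Module

theorem stmt19 {m : ℕ} (hm : 2 ≤ m) (μ : ℂ) (hμ : μ = 0 ∨ μ = 1)
    {L : Type} [LieRing L] [LieAlgebra ℂ L]
    (e : ℕ → L) (b : Basis (Fin (2*m+1)) ℂ L)
    (hb : ∀ i : Fin (2*m+1), b i = e (i.val+1))
    (hrel1 : ∀ k, 2 ≤ k → k ≤ 2*m → ⁅e 1, e k⁆ = e (k+1))
    (hrel2 : ∀ k, 2 ≤ k → k ≤ m → ⁅e k, e (2*m+2-k)⁆ = ((-1:ℂ))^k • e (2*m+1))
    (hrel0 : ∀ i j, 1 ≤ i → i < j → j ≤ 2*m+1 →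
      ¬(i = 1 ∧ j ≤ 2*m) → ¬(2 ≤ i ∧ i ≤ m ∧ j = 2*m+2-i) → ⁅e i, e j⁆ = 0)

    (D₂ : Module.End ℂ L)
    (hD₂der : ∀ x y : L, D₂ ⁅x, y⁆ = ⁅D₂ x, y⁆ + ⁅x, D₂ y⁆)
    (hD₂1 : D₂ (e 1) = e 2)
    (hD₂i : ∀ i, 2 ≤ i → i ≤ 2*m → i ≠ m+1 → D₂ (e i) = e i)
    (hD₂m : D₂ (e (m+1)) = e (m+1) + (μ / ((m : ℂ) - 1)) • e (2*m+1))
    (hD₂l : D₂ (e (2*m+1)) = (2 : ℂ) • e (2*m+1)) :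
    ¬ ∃ z : L, ∀ x : L, ⁅z, x⁆ = D₂ x := by
  rintro ⟨z, hz⟩
  have hcentral : ∀ i : Fin (2*m+1), ⁅b i, e (2*m+1)⁆ = 0 := by
    intro i
    rw [hb]
    rcases eq_or_lt_of_le (Nat.succ_le_of_lt i.isLt) with h | h
    · rw [show i.val + 1 = 2*m+1 by omega]; exact lie_self _
    · exact hrel0 (i.val+1) (2*m+1) (Nat.le_add_left 1 _) h le_rfl
        (by rintro ⟨h1, h2⟩; omega)
        (by rintro ⟨h1, h2, h3⟩; omega)
  have hz0 : ⁅z, e (2*m+1)⁆ = 0 := by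
    let f : L →ₗ[ℂ] L :=
      { toFun := fun x => ⁅x, e (2*m+1)⁆
        map_add' := fun x y => add_lie x y _
        map_smul' := fun c x => smul_lie c x _ }
    have hf : ∀ x : L, f x = ⁅x, e (2*m+1)⁆ := fun _ => rfl
    calc ⁅z, e (2*m+1)⁆ = f (∑ i, b.repr z i • b i) := by
          rw [Basis.sum_repr b z, hf]
      _ = ∑ i, b.repr z i • f (b i) := by
          rw [map_sum]; simp
      _ = 0 := by simp [hf, hcentral]
  have h1 := hz (e (2*m+1))
  rw [hz0, hD₂l] at h1
  have hne : e (2*m+1) ≠ 0 := by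
    have := b.ne_zero ⟨2*m, by omega⟩
    rwa [hb] at this
  have h2 : (2:ℂ) • e (2*m+1) = 0 := h1.symm
  rw [smul_eq_zero] at h2
  rcases h2 with h2 | h2
  · norm_num at h2
  · exact hne h2
end
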